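/- Let 0 ≤ s ≤ r−1 and let α = (α_0,…,α_r) have all coordinates nonnegative with D_s(α) < 1 < D_{s+1}(α). For each n set p_i = n^{−α_i}. Then the P_r-probability that the random complex Y ∈ Y_r(n; n^{−α}) has dimension exactly s (it contains a face of cardinality s+1 but no face of cardinality s+2) tends to 1 as n → ∞. -/

import Mathlib

open Finset Filter

/-- A subcomplex of the `r`-skeleton of the simplex on vertex set `Fin n`:
a collection of nonempty faces of cardinality at most `r+1`, closed under
passing to nonempty subsets. -/
def IsComplex (n r : ℕ) (Y : Finset (Finset (Fin n))) : Prop :=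
  (∀ σ ∈ Y, σ.Nonempty ∧ σ.card ≤ r + 1) ∧
    ∀ σ ∈ Y, ∀ τ ⊆ σ, τ.Nonempty → τ ∈ Y

/-- `fCount Y i` = number of faces of `Y` of cardinality `i+1` (i.e. of dimension `i`). -/
def fCount {n : ℕ} (Y : Finset (Finset (Fin n))) (i : ℕ) : ℕ :=
  (Y.filter fun σ => σ.card = i + 1).card

/-- `eCount Y i` = number of external `i`-faces of `Y`: sets `σ` of cardinality `i+1`
that are not faces of `Y` but all of whose (nonempty) `i`-element subsets are faces of `Y`. -/
def eCount {n : ℕ} (Y : Finset (Finset (Fin n))) (i : ℕ) : ℕ :=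
  ((univ : Finset (Finset (Fin n))).filter fun σ =>
    σ.card = i + 1 ∧ σ ∉ Y ∧ ∀ τ ⊆ σ, τ.card = i → τ.Nonempty → τ ∈ Y).card

/-- The weight `P_r(Y) = ∏_{i=0}^r p_i^{f_i(Y)} (1-p_i)^{e_i(Y)}`. -/
noncomputable def weight (n r : ℕ) (p : ℕ → ℝ) (Y : Finset (Finset (Fin n))) : ℝ :=
  ∏ i ∈ Finset.range (r + 1), p i ^ fCount Y i * (1 - p i) ^ eCount Y i

open scoped Classical in
/-- The finite set of all subcomplexes of `Δ_n^{(r)}`. -/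
noncomputable def complexes (n r : ℕ) : Finset (Finset (Finset (Fin n))) :=
  (univ : Finset (Finset (Finset (Fin n)))).filter (IsComplex n r)

/-- A finite abstract simplicial complex on a vertex type `V`. -/
def IsSimpComplex {V : Type*} [DecidableEq V] (S : Finset (Finset V)) : Prop :=
  S.Nonempty ∧ (∀ σ ∈ S, σ.Nonempty) ∧ ∀ σ ∈ S, ∀ τ ⊆ σ, τ.Nonempty → τ ∈ S

/-- `fS S i` = number of faces of `S` of cardinality `i+1`. -/
def fS {V : Type*} [DecidableEq V] (S : Finset (Finset V)) (i : ℕ) : ℕ :=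
  (S.filter fun σ => σ.card = i + 1).card

/-- The degree of a face `σ` in `S`: the number of faces of one higher dimension containing it. -/
def degFace {V : Type*} [DecidableEq V] (S : Finset (Finset V)) (σ : Finset V) : ℕ :=
  (S.filter fun τ => τ.card = σ.card + 1 ∧ σ ⊆ τ).card

-- ----------------- my aux ------------------
section Aux

open scoped Classical

variable {n : ℕ}

/-- complexes with faces of card at most `k`. -/
noncomputable def Cpx (n k : ℕ) : Finset (Finset (Finset (Fin n))) :=
  univ.filter (fun Y => (∀ σ ∈ Y, σ.Nonempty ∧ σ.card ≤ k) ∧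
    ∀ σ ∈ Y, ∀ τ ⊆ σ, τ.Nonempty → τ ∈ Y)

lemma mem_Cpx {k : ℕ} {Y : Finset (Finset (Fin n))} :
    Y ∈ Cpx n k ↔ (∀ σ ∈ Y, σ.Nonempty ∧ σ.card ≤ k) ∧
      ∀ σ ∈ Y, ∀ τ ⊆ σ, τ.Nonempty → τ ∈ Y := by
  simp [Cpx]

lemma complexes_eq (n r : ℕ) : complexes n r = Cpx n (r + 1) := by
  unfold complexes Cpx
  apply Finset.filter_congr
  intro Y _
  simp [IsComplex]

noncomputable def wt (n k : ℕ) (p : ℕ → ℝ) (Y : Finset (Finset (Fin n))) : ℝ :=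
  ∏ i ∈ Finset.range k, p i ^ fCount Y i * (1 - p i) ^ eCount Y i

lemma weight_eq (n r : ℕ) (p : ℕ → ℝ) : weight n r p = wt n (r + 1) p := rfl

/-- binomial-type sum over subsets containing a fixed set -/
lemma sum_powerset_between {α : Type*} [DecidableEq α] (T B : Finset α) (hB : B ⊆ T)
    (x y : ℝ) :
    ∑ S ∈ T.powerset.filter (B ⊆ ·), x ^ S.card * y ^ (T.card - S.card)
      = x ^ B.card * (x + y) ^ (T.card - B.card) := by
  have key : ∀ (U : Finset α), ∑ S ∈ U.powerset, x ^ S.card * y ^ (U.card - S.card)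
      = (x + y) ^ U.card := by
    intro U
    have h := Finset.prod_add (fun _ : α => x) (fun _ : α => y) U
    simp only [Finset.prod_const] at h
    rw [h]
    apply Finset.sum_congr rfl
    intro S hS
    rw [Finset.mem_powerset] at hS
    rw [Finset.card_sdiff_of_subset hS]
  have hinj : ∀ S ∈ (T \ B).powerset, ∀ S' ∈ (T \ B).powerset,
      S ∪ B = S' ∪ B → S = S' := by
    intro S hS S' hS' h
    rw [Finset.mem_powerset] at hS hS'
    have d : Disjoint S B := Finset.sdiff_disjoint.mono_left hS
    have d' : Disjoint S' B := Finset.sdiff_disjoint.mono_left hS'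
    have h2 := congrArg (fun W => W \ B) h
    simpa [Finset.union_sdiff_cancel_right d, Finset.union_sdiff_cancel_right d'] using h2
  have himg : T.powerset.filter (B ⊆ ·) = ((T \ B).powerset).image (fun S => S ∪ B) := by
    ext S
    simp only [Finset.mem_filter, Finset.mem_powerset, Finset.mem_image]
    constructor
    · rintro ⟨hST, hBS⟩
      exact ⟨S \ B, Finset.sdiff_subset_sdiff hST (le_refl _),
        Finset.sdiff_union_of_subset hBS⟩
    · rintro ⟨S', hS', rfl⟩
      exact ⟨Finset.union_subset (hS'.trans Finset.sdiff_subset) hB,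
        Finset.subset_union_right⟩
  rw [himg, Finset.sum_image hinj,
    show T.card - B.card = (T \ B).card from (Finset.card_sdiff_of_subset hB).symm, ← key (T \ B),
    Finset.mul_sum]
  apply Finset.sum_congr rfl
  intro S hS
  rw [Finset.mem_powerset] at hS
  have hdisj : Disjoint S B := Finset.sdiff_disjoint.mono_left hS
  rw [Finset.card_union_of_disjoint hdisj]
  have h1 : S.card ≤ (T \ B).card := Finset.card_le_card hS
  have h2 : (T \ B).card = T.card - B.card := Finset.card_sdiff_of_subset hB
  have h3 : B.card ≤ T.card := Finset.card_le_card hB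
  rw [show T.card - (S.card + B.card) = (T \ B).card - S.card by omega]
  ring

/-- potential top-dimensional faces over a `k`-complex `Z` -/
noncomputable def ExtF (k : ℕ) (Z : Finset (Finset (Fin n))) : Finset (Finset (Fin n)) :=
  univ.filter (fun σ => σ.card = k + 1 ∧ ∀ τ ⊆ σ, τ.card = k → τ.Nonempty → τ ∈ Z)

lemma mem_ExtF {k : ℕ} {Z σ} : σ ∈ ExtF (n := n) k Z ↔
    σ.card = k + 1 ∧ ∀ τ ⊆ σ, τ.card = k → τ.Nonempty → τ ∈ Z := by
  unfold ExtF
  rw [Finset.mem_filter]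
  simp only [Finset.mem_univ, true_and]

def skl (k : ℕ) (Y : Finset (Finset (Fin n))) : Finset (Finset (Fin n)) :=
  Y.filter (fun σ => σ.card ≤ k)

def tp (k : ℕ) (Y : Finset (Finset (Fin n))) : Finset (Finset (Fin n)) :=
  Y.filter (fun σ => σ.card = k + 1)

variable {k : ℕ} {Y Z S : Finset (Finset (Fin n))}

lemma skl_mem_Cpx (hY : Y ∈ Cpx n (k + 1)) : skl k Y ∈ Cpx n k := by
  rw [mem_Cpx] at hY ⊢
  constructor
  · intro σ hσ
    rw [skl, Finset.mem_filter] at hσ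
    exact ⟨(hY.1 σ hσ.1).1, hσ.2⟩
  · intro σ hσ τ hτσ hτ
    rw [skl, Finset.mem_filter] at hσ ⊢
    exact ⟨hY.2 σ hσ.1 τ hτσ hτ, le_trans (Finset.card_le_card hτσ) hσ.2⟩

lemma tp_subset_ExtF (hY : Y ∈ Cpx n (k + 1)) : tp k Y ⊆ ExtF k (skl k Y) := by
  rw [mem_Cpx] at hY
  intro σ hσ
  rw [tp, Finset.mem_filter] at hσ
  rw [mem_ExtF]
  refine ⟨hσ.2, fun τ hτσ hτc hτne => ?_⟩
  rw [skl, Finset.mem_filter]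
  exact ⟨hY.2 σ hσ.1 τ hτσ hτne, le_of_eq hτc⟩

lemma skl_union_tp (hY : Y ∈ Cpx n (k + 1)) : skl k Y ∪ tp k Y = Y := by
  rw [mem_Cpx] at hY
  rw [skl, tp, ← Finset.filter_or]
  apply Finset.filter_true_of_mem
  intro σ hσ
  have := (hY.1 σ hσ).2
  omega

lemma fCount_skl {i : ℕ} (h : i + 1 ≤ k) : fCount (skl k Y) i = fCount Y i := by
  unfold fCount skl
  rw [Finset.filter_filter]
  congr 1
  apply Finset.filter_congr
  intro σ _
  constructor
  · exact fun h => h.2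
  · exact fun hc => ⟨by omega, hc⟩

lemma eCount_congr {W : Finset (Finset (Fin n))} {i : ℕ}
    (h : ∀ σ : Finset (Fin n), σ.card ≤ k → (σ ∈ W ↔ σ ∈ Y)) (hik : i + 1 ≤ k) :
    eCount W i = eCount Y i := by
  unfold eCount
  congr 1
  apply Finset.filter_congr
  intro σ _
  constructor <;> rintro ⟨h1, h2, h3⟩ <;> refine ⟨h1, fun hc => h2 ?_, fun τ hτσ hτc hτn => ?_⟩
  · exact (h σ (by omega)).mpr hc
  · exact (h τ (by omega)).mp (h3 τ hτσ hτc hτn)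
  · exact (h σ (by omega)).mp hc
  · exact (h τ (by omega)).mpr (h3 τ hτσ hτc hτn)

lemma eCount_skl {i : ℕ} (h : i + 1 ≤ k) : eCount (skl k Y) i = eCount Y i := by
  apply eCount_congr _ h
  intro σ hσ
  rw [skl, Finset.mem_filter]
  exact ⟨fun h => h.1, fun h => ⟨h, hσ⟩⟩

lemma eCount_tp (hY : Y ∈ Cpx n (k + 1)) :
    eCount Y k = (ExtF k (skl k Y)).card - (tp k Y).card := by
  have hsub := tp_subset_ExtF hY
  have hset : (univ.filter fun σ : Finset (Fin n) =>
      σ.card = k + 1 ∧ σ ∉ Y ∧ ∀ τ ⊆ σ, τ.card = k → τ.Nonempty → τ ∈ Y)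
      = ExtF k (skl k Y) \ tp k Y := by
    ext σ
    simp only [Finset.mem_filter, Finset.mem_univ, true_and, Finset.mem_sdiff, mem_ExtF,
      tp, skl, Finset.mem_filter]
    constructor
    · rintro ⟨h1, h2, h3⟩
      exact ⟨⟨h1, fun τ hτσ hτc hτn => ⟨h3 τ hτσ hτc hτn, le_of_eq hτc⟩⟩,
        fun hc => h2 hc.1⟩
    · rintro ⟨⟨h1, h2⟩, h3⟩
      refine ⟨h1, fun hσY => h3 ?_, fun τ hτσ hτc hτn => ?_⟩
      · exact ⟨hσY, h1⟩
      · exact (h2 τ hτσ hτc hτn).1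
  unfold eCount
  rw [hset, Finset.card_sdiff_of_subset hsub]

lemma wt_split (p : ℕ → ℝ) (hY : Y ∈ Cpx n (k + 1)) :
    wt n (k + 1) p Y = wt n k p (skl k Y) *
      (p k ^ (tp k Y).card * (1 - p k) ^ ((ExtF k (skl k Y)).card - (tp k Y).card)) := by
  unfold wt
  rw [Finset.prod_range_succ]
  congr 1
  · apply Finset.prod_congr rfl
    intro i hi
    rw [Finset.mem_range] at hi
    rw [fCount_skl (by omega), eCount_skl (by omega)]
  · rw [show fCount Y k = (tp k Y).card from rfl, eCount_tp hY]

lemma union_mem_Cpx (hZ : Z ∈ Cpx n k) (hS : S ⊆ ExtF k Z) : Z ∪ S ∈ Cpx n (k + 1) := by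
  rw [mem_Cpx] at hZ ⊢
  have hScard : ∀ σ ∈ S, σ.card = k + 1 := fun σ hσ => (mem_ExtF.mp (hS hσ)).1
  constructor
  · intro σ hσ
    rcases Finset.mem_union.mp hσ with h | h
    · exact ⟨(hZ.1 σ h).1, le_trans (hZ.1 σ h).2 (Nat.le_succ k)⟩
    · refine ⟨?_, le_of_eq (hScard σ h)⟩
      rw [← Finset.card_pos, hScard σ h]; omega
  · intro σ hσ τ hτσ hτn
    rcases Finset.mem_union.mp hσ with h | h
    · exact Finset.mem_union_left _ (hZ.2 σ h τ hτσ hτn)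
    · rcases eq_or_lt_of_le (Finset.card_le_card hτσ) with hc | hc
      · have : τ = σ := Finset.eq_of_subset_of_card_le hτσ (le_of_eq hc.symm)
        rw [this]; exact Finset.mem_union_right _ h
      · -- τ is a proper subset: card τ ≤ k
        apply Finset.mem_union_left
        have hτk : τ.card ≤ k := by have := hScard σ h; omega
        rcases eq_or_lt_of_le hτk with hk | hk
        · exact (mem_ExtF.mp (hS h)).2 τ hτσ hk hτn
        · -- τ.card < k : extend τ to a k-subset of σ
          obtain ⟨u, hτu, huσ, huc⟩ := Finset.exists_subsuperset_card_eq hτσ (le_of_lt hk)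
            (by rw [hScard σ h]; omega)
          have hu : u ∈ Z := (mem_ExtF.mp (hS h)).2 u huσ huc
            (by rw [← Finset.card_pos, huc]; omega)
          exact hZ.2 u hu τ hτu hτn

lemma skl_union (hZ : Z ∈ Cpx n k) (hS : S ⊆ ExtF k Z) : skl k (Z ∪ S) = Z := by
  rw [mem_Cpx] at hZ
  rw [skl, Finset.filter_union]
  have h1 : Z.filter (fun σ => σ.card ≤ k) = Z :=
    Finset.filter_true_of_mem (fun σ hσ => (hZ.1 σ hσ).2)
  have h2 : S.filter (fun σ => σ.card ≤ k) = ∅ := by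
    apply Finset.filter_false_of_mem
    intro σ hσ
    have := (mem_ExtF.mp (hS hσ)).1
    omega
  rw [h1, h2, Finset.union_empty]

lemma tp_union (hZ : Z ∈ Cpx n k) (hS : S ⊆ ExtF k Z) : tp k (Z ∪ S) = S := by
  rw [mem_Cpx] at hZ
  rw [tp, Finset.filter_union]
  have h1 : Z.filter (fun σ => σ.card = k + 1) = ∅ := by
    apply Finset.filter_false_of_mem
    intro σ hσ
    have := (hZ.1 σ hσ).2
    omega
  have h2 : S.filter (fun σ => σ.card = k + 1) = S :=
    Finset.filter_true_of_mem (fun σ hσ => (mem_ExtF.mp (hS hσ)).1)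
  rw [h1, h2, Finset.empty_union]

theorem engine (p : ℕ → ℝ) : ∀ (k : ℕ) (A : Finset (Finset (Fin n))),
    (∀ σ ∈ A, σ.Nonempty ∧ σ.card ≤ k) → (∀ σ ∈ A, ∀ τ ⊆ σ, τ.Nonempty → τ ∈ A) →
    ∑ Y ∈ (Cpx n k).filter (A ⊆ ·), wt n k p Y = ∏ i ∈ Finset.range k, p i ^ fCount A i := by
  intro k
  induction k with
  | zero =>
    intro A hA1 _
    have hC : Cpx n 0 = {∅} := by
      ext Y
      rw [mem_Cpx, Finset.mem_singleton]
      constructor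
      · rintro ⟨h1, -⟩
        rw [Finset.eq_empty_iff_forall_notMem]
        intro σ hσ
        have h2 := (h1 σ hσ).1.card_pos
        have h3 := (h1 σ hσ).2
        omega
      · rintro rfl
        exact ⟨fun σ hσ => absurd hσ (Finset.notMem_empty σ), fun σ hσ => absurd hσ (Finset.notMem_empty σ)⟩
    have hA : A = ∅ := by
      rw [Finset.eq_empty_iff_forall_notMem]
      intro σ hσ
      have h2 := (hA1 σ hσ).1.card_pos
      have h3 := (hA1 σ hσ).2
      omega
    subst hA
    rw [hC]
    rw [Finset.filter_true_of_mem (fun Y _ => Finset.empty_subset Y)]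
    simp [wt]
  | succ k ih =>
    intro A hA1 hA2
    set A' := A.filter (fun σ => σ.card ≤ k) with hA'def
    set B := A.filter (fun σ => σ.card = k + 1) with hBdef
    -- the sigma set
    set D := ((Cpx n k).filter (A' ⊆ ·)).sigma
      (fun Z => (ExtF k Z).powerset.filter (B ⊆ ·)) with hDdef
    have hbij : ∑ Y ∈ (Cpx n (k + 1)).filter (A ⊆ ·), wt n (k + 1) p Y
        = ∑ ZS ∈ D, wt n k p ZS.1 *
            (p k ^ ZS.2.card * (1 - p k) ^ ((ExtF k ZS.1).card - ZS.2.card)) := by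
      apply Finset.sum_bij' (i := fun Y _ => (⟨skl k Y, tp k Y⟩ : Σ _ : Finset (Finset (Fin n)), Finset (Finset (Fin n))))
        (j := fun ZS _ => ZS.1 ∪ ZS.2)
      · intro Y hY
        rw [Finset.mem_filter] at hY
        obtain ⟨hYC, hAY⟩ := hY
        rw [hDdef, Finset.mem_sigma]
        constructor
        · rw [Finset.mem_filter]
          refine ⟨skl_mem_Cpx hYC, ?_⟩
          intro σ hσ
          rw [hA'def, Finset.mem_filter] at hσ
          rw [skl, Finset.mem_filter]
          exact ⟨hAY hσ.1, hσ.2⟩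
        · rw [Finset.mem_filter, Finset.mem_powerset]
          refine ⟨tp_subset_ExtF hYC, ?_⟩
          intro σ hσ
          rw [hBdef, Finset.mem_filter] at hσ
          rw [tp, Finset.mem_filter]
          exact ⟨hAY hσ.1, hσ.2⟩
      · rintro ⟨Z, S⟩ hZS
        rw [hDdef, Finset.mem_sigma, Finset.mem_filter, Finset.mem_filter,
          Finset.mem_powerset] at hZS
        obtain ⟨⟨hZC, hA'Z⟩, hSE, hBS⟩ := hZS
        rw [Finset.mem_filter]
        refine ⟨union_mem_Cpx hZC hSE, ?_⟩
        intro σ hσ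
        rcases le_or_gt σ.card k with hc | hc
        · apply Finset.mem_union_left
          apply hA'Z
          rw [hA'def, Finset.mem_filter]
          exact ⟨hσ, hc⟩
        · apply Finset.mem_union_right
          apply hBS
          rw [hBdef, Finset.mem_filter]
          have := (hA1 σ hσ).2
          exact ⟨hσ, by omega⟩
      · intro Y hY
        rw [Finset.mem_filter] at hY
        exact skl_union_tp hY.1
      · rintro ⟨Z, S⟩ hZS
        rw [hDdef, Finset.mem_sigma, Finset.mem_filter, Finset.mem_filter,
          Finset.mem_powerset] at hZS
        obtain ⟨⟨hZC, hA'Z⟩, hSE, hBS⟩ := hZS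
        have h1 := skl_union hZC hSE
        have h2 := tp_union hZC hSE
        simp only [h1, h2]
      · intro Y hY
        rw [Finset.mem_filter] at hY
        exact wt_split p hY.1
    rw [hbij, hDdef, Finset.sum_sigma]
    have hinner : ∀ Z ∈ (Cpx n k).filter (A' ⊆ ·),
        ∑ S ∈ (ExtF k Z).powerset.filter (B ⊆ ·),
          wt n k p Z * (p k ^ S.card * (1 - p k) ^ ((ExtF k Z).card - S.card))
        = wt n k p Z * p k ^ fCount A k := by
      intro Z hZ
      rw [Finset.mem_filter] at hZ
      have hBE : B ⊆ ExtF k Z := by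
        intro σ hσ
        rw [hBdef, Finset.mem_filter] at hσ
        rw [mem_ExtF]
        refine ⟨hσ.2, fun τ hτσ hτc hτn => ?_⟩
        apply hZ.2
        rw [hA'def, Finset.mem_filter]
        exact ⟨hA2 σ hσ.1 τ hτσ hτn, le_of_eq hτc⟩
      rw [← Finset.mul_sum, sum_powerset_between _ _ hBE]
      have : p k + (1 - p k) = 1 := by ring
      rw [this, one_pow, mul_one]
      rfl
    rw [Finset.sum_congr rfl hinner, ← Finset.sum_mul]
    have hA'1 : ∀ σ ∈ A', σ.Nonempty ∧ σ.card ≤ k := by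
      intro σ hσ
      rw [hA'def, Finset.mem_filter] at hσ
      exact ⟨(hA1 σ hσ.1).1, hσ.2⟩
    have hA'2 : ∀ σ ∈ A', ∀ τ ⊆ σ, τ.Nonempty → τ ∈ A' := by
      intro σ hσ τ hτσ hτn
      rw [hA'def, Finset.mem_filter] at hσ ⊢
      exact ⟨hA2 σ hσ.1 τ hτσ hτn, le_trans (Finset.card_le_card hτσ) hσ.2⟩
    rw [ih A' hA'1 hA'2, Finset.prod_range_succ]
    congr 1
    apply Finset.prod_congr rfl
    intro i hi
    rw [Finset.mem_range] at hi
    congr 1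
    unfold fCount
    rw [hA'def, Finset.filter_filter]
    congr 1
    apply Finset.filter_congr
    intro σ _
    constructor
    · exact fun h => h.2
    · exact fun h => ⟨by omega, h⟩

lemma wt_nonneg (p : ℕ → ℝ) (hp0 : ∀ i, 0 ≤ p i) (hp1 : ∀ i, p i ≤ 1)
    (k : ℕ) (Y : Finset (Finset (Fin n))) : 0 ≤ wt n k p Y :=
  Finset.prod_nonneg fun i _ => mul_nonneg (pow_nonneg (hp0 i) _)
    (pow_nonneg (by linarith [hp1 i]) _)

lemma total_one (p : ℕ → ℝ) (k : ℕ) : ∑ Y ∈ Cpx n k, wt n k p Y = 1 := by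
  have h := engine (n := n) p k ∅ (by simp) (by simp)
  simp only [fCount, Finset.filter_empty, Finset.card_empty, pow_zero,
    Finset.prod_const_one] at h
  rw [← h]
  congr 1
  rw [Finset.filter_true_of_mem (fun Y _ => Finset.empty_subset Y)]

/-- the full subcomplex generated by a set of vertices -/
def cl (σ : Finset (Fin n)) : Finset (Finset (Fin n)) := σ.powerset.erase ∅

lemma mem_cl {σ τ : Finset (Fin n)} : τ ∈ cl σ ↔ τ ⊆ σ ∧ τ.Nonempty := by
  rw [cl, Finset.mem_erase, Finset.mem_powerset, and_comm, Finset.nonempty_iff_ne_empty]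

lemma fCount_cl (σ : Finset (Fin n)) (i : ℕ) : fCount (cl σ) i = σ.card.choose (i + 1) := by
  unfold fCount
  rw [show (cl σ).filter (fun τ => τ.card = i + 1) = σ.powersetCard (i + 1) from ?_]
  · exact Finset.card_powersetCard _ _
  · ext τ
    rw [Finset.mem_filter, mem_cl, Finset.mem_powersetCard]
    constructor
    · rintro ⟨⟨h1, _⟩, h3⟩; exact ⟨h1, h3⟩
    · rintro ⟨h1, h2⟩
      exact ⟨⟨h1, by rw [← Finset.card_pos, h2]; omega⟩, h2⟩

lemma cl_closed (σ : Finset (Fin n)) : ∀ ρ ∈ cl σ, ∀ τ ⊆ ρ, τ.Nonempty → τ ∈ cl σ := by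
  intro ρ hρ τ hτρ hτn
  rw [mem_cl] at hρ ⊢
  exact ⟨hτρ.trans hρ.1, hτn⟩

lemma cl_card {k : ℕ} (σ : Finset (Fin n)) (h : σ.card ≤ k) :
    ∀ τ ∈ cl σ, τ.Nonempty ∧ τ.card ≤ k := by
  intro τ hτ
  rw [mem_cl] at hτ
  exact ⟨hτ.2, le_trans (Finset.card_le_card hτ.1) h⟩

lemma event_mem_eq_cl {k : ℕ} (σ : Finset (Fin n)) (hσ : σ.Nonempty) :
    (Cpx n k).filter (fun Y => σ ∈ Y) = (Cpx n k).filter (fun Y => cl σ ⊆ Y) := by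
  apply Finset.filter_congr
  intro Y hY
  rw [mem_Cpx] at hY
  constructor
  · intro hσY τ hτ
    rw [mem_cl] at hτ
    exact hY.2 σ hσY τ hτ.1 hτ.2
  · intro h
    exact h (mem_cl.mpr ⟨Finset.Subset.refl σ, hσ⟩)

lemma prob_face {k : ℕ} (p : ℕ → ℝ) (σ : Finset (Fin n)) (hσ : σ.Nonempty) (hc : σ.card ≤ k) :
    ∑ Y ∈ (Cpx n k).filter (fun Y => σ ∈ Y), wt n k p Y
      = ∏ i ∈ Finset.range k, p i ^ (σ.card.choose (i + 1)) := by
  rw [event_mem_eq_cl σ hσ]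
  have h := engine (n := n) p k (cl σ) (cl_card σ hc) (cl_closed σ)
  rw [show ((Cpx n k).filter fun Y => cl σ ⊆ Y) = (Cpx n k).filter (cl σ ⊆ ·) from rfl, h]
  exact Finset.prod_congr rfl fun i _ => by rw [fCount_cl]

lemma cl_union_inter (σ τ : Finset (Fin n)) : cl σ ∩ cl τ = cl (σ ∩ τ) := by
  ext ρ
  rw [Finset.mem_inter, mem_cl, mem_cl, mem_cl, Finset.subset_inter_iff]
  tauto

lemma fCount_cl_union (σ τ : Finset (Fin n)) (i : ℕ) :
    fCount (cl σ ∪ cl τ) i + (σ ∩ τ).card.choose (i + 1)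
      = σ.card.choose (i + 1) + τ.card.choose (i + 1) := by
  unfold fCount
  rw [Finset.filter_union]
  rw [← fCount_cl σ i, ← fCount_cl τ i, ← fCount_cl (σ ∩ τ) i]
  unfold fCount
  rw [← cl_union_inter, Finset.filter_inter_distrib]
  exact Finset.card_union_add_card_inter _ _

lemma event_mem2_eq_cl {k : ℕ} (σ τ : Finset (Fin n)) (hσ : σ.Nonempty) (hτ : τ.Nonempty) :
    (Cpx n k).filter (fun Y => σ ∈ Y ∧ τ ∈ Y)
      = (Cpx n k).filter (fun Y => cl σ ∪ cl τ ⊆ Y) := by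
  apply Finset.filter_congr
  intro Y hY
  rw [mem_Cpx] at hY
  constructor
  · rintro ⟨h1, h2⟩ ρ hρ
    rcases Finset.mem_union.mp hρ with h | h <;> rw [mem_cl] at h
    · exact hY.2 σ h1 ρ h.1 h.2
    · exact hY.2 τ h2 ρ h.1 h.2
  · intro h
    exact ⟨h (Finset.mem_union_left _ (mem_cl.mpr ⟨Finset.Subset.refl σ, hσ⟩)),
      h (Finset.mem_union_right _ (mem_cl.mpr ⟨Finset.Subset.refl τ, hτ⟩))⟩

lemma prob_face2 {k : ℕ} (p : ℕ → ℝ) (σ τ : Finset (Fin n)) (hσ : σ.Nonempty) (hτ : τ.Nonempty)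
    (hcσ : σ.card ≤ k) (hcτ : τ.card ≤ k) :
    ∑ Y ∈ (Cpx n k).filter (fun Y => σ ∈ Y ∧ τ ∈ Y), wt n k p Y
      = ∏ i ∈ Finset.range k, p i ^ fCount (cl σ ∪ cl τ) i := by
  rw [event_mem2_eq_cl σ τ hσ hτ]
  have hcard : ∀ ρ ∈ cl σ ∪ cl τ, ρ.Nonempty ∧ ρ.card ≤ k := by
    intro ρ hρ
    rcases Finset.mem_union.mp hρ with h | h
    · exact cl_card σ hcσ ρ h
    · exact cl_card τ hcτ ρ h
  have hclosed : ∀ ρ ∈ cl σ ∪ cl τ, ∀ π ⊆ ρ, π.Nonempty → π ∈ cl σ ∪ cl τ := by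
    intro ρ hρ π hπρ hπn
    rcases Finset.mem_union.mp hρ with h | h
    · exact Finset.mem_union_left _ (cl_closed σ ρ h π hπρ hπn)
    · exact Finset.mem_union_right _ (cl_closed τ ρ h π hπρ hπn)
  exact engine (n := n) p k _ hcard hclosed

/-- generic union bound -/
lemma union_bound {ι κ : Type*} (C : Finset ι) (w : ι → ℝ) (hw : ∀ Y ∈ C, 0 ≤ w Y)
    (Q : ι → Prop) [DecidablePred Q] (I : Finset κ) (Mem : κ → ι → Prop)
    [∀ σ, DecidablePred (Mem σ)] [∀ Y, DecidablePred (fun σ => Mem σ Y)]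
    (hQ : ∀ Y ∈ C, Q Y → ∃ σ ∈ I, Mem σ Y) :
    ∑ Y ∈ C.filter Q, w Y ≤ ∑ σ ∈ I, ∑ Y ∈ C.filter (fun Y => Mem σ Y), w Y := by
  have step1 : ∑ Y ∈ C.filter Q, w Y
      ≤ ∑ Y ∈ C.filter Q, ∑ σ ∈ I.filter (fun σ => Mem σ Y), w Y := by
    apply Finset.sum_le_sum
    intro Y hY
    rw [Finset.mem_filter] at hY
    obtain ⟨σ0, hσ0I, hσ0⟩ := hQ Y hY.1 hY.2
    have hσ0' : σ0 ∈ I.filter (fun σ => Mem σ Y) := Finset.mem_filter.mpr ⟨hσ0I, hσ0⟩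
    exact Finset.single_le_sum (f := fun _ => w Y) (fun i _ => hw Y hY.1) hσ0'
  have step2 : ∑ Y ∈ C.filter Q, ∑ σ ∈ I.filter (fun σ => Mem σ Y), w Y
      = ∑ σ ∈ I, ∑ Y ∈ (C.filter Q).filter (fun Y => Mem σ Y), w Y := by
    have e1 : ∀ Y, ∑ σ ∈ I.filter (fun σ => Mem σ Y), w Y
        = ∑ σ ∈ I, if Mem σ Y then w Y else 0 := fun Y => (Finset.sum_filter _ _)
    have e2 : ∀ σ, ∑ Y ∈ (C.filter Q).filter (fun Y => Mem σ Y), w Y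
        = ∑ Y ∈ C.filter Q, if Mem σ Y then w Y else 0 := fun σ => (Finset.sum_filter _ _)
    rw [Finset.sum_congr rfl (fun Y _ => e1 Y), Finset.sum_congr rfl (fun σ _ => e2 σ)]
    exact Finset.sum_comm
  rw [step2] at step1
  apply le_trans step1
  apply Finset.sum_le_sum
  intro σ _
  apply Finset.sum_le_sum_of_subset_of_nonneg
  · intro Y hY
    rw [Finset.mem_filter] at hY ⊢
    exact ⟨(Finset.mem_filter.mp hY.1).1, hY.2⟩
  · intro Y hY _
    exact hw Y (Finset.mem_filter.mp hY).1

/-- Chebyshev-type bound -/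
lemma cheb {ι : Type*} (C : Finset ι) (w : ι → ℝ) (hw : ∀ Y ∈ C, 0 ≤ w Y)
    (htot : ∑ Y ∈ C, w Y = 1) (X : ι → ℝ) :
    (∑ Y ∈ C.filter (fun Y => X Y = 0), w Y) * (∑ Y ∈ C, w Y * X Y) ^ 2
      ≤ (∑ Y ∈ C, w Y * X Y ^ 2) - (∑ Y ∈ C, w Y * X Y) ^ 2 := by
  set m := ∑ Y ∈ C, w Y * X Y with hm
  have h1 : ∑ Y ∈ C, w Y * (X Y - m) ^ 2 = (∑ Y ∈ C, w Y * X Y ^ 2) - m ^ 2 := by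
    have he : ∀ Y, w Y * (X Y - m) ^ 2
        = w Y * X Y ^ 2 - 2 * m * (w Y * X Y) + m ^ 2 * w Y := fun Y => by ring
    rw [Finset.sum_congr rfl (fun Y _ => he Y), Finset.sum_add_distrib,
      Finset.sum_sub_distrib, ← Finset.mul_sum, ← Finset.mul_sum, ← hm, htot]
    ring
  rw [← h1]
  calc (∑ Y ∈ C.filter (fun Y => X Y = 0), w Y) * m ^ 2
      = ∑ Y ∈ C.filter (fun Y => X Y = 0), w Y * (X Y - m) ^ 2 := by
        rw [Finset.sum_mul]
        apply Finset.sum_congr rfl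
        intro Y hY
        rw [Finset.mem_filter] at hY
        rw [hY.2]
        ring
    _ ≤ ∑ Y ∈ C, w Y * (X Y - m) ^ 2 := by
        apply Finset.sum_le_sum_of_subset_of_nonneg (Finset.filter_subset _ _)
        intro Y hY _
        exact mul_nonneg (hw Y hY) (sq_nonneg _)

lemma sum_mul_ind {ι : Type*} (C : Finset ι) (w : ι → ℝ) (A : ι → Prop) [DecidablePred A] :
    ∑ Y ∈ C, w Y * (if A Y then (1:ℝ) else 0) = ∑ Y ∈ C.filter A, w Y := by
  rw [Finset.sum_filter]
  apply Finset.sum_congr rfl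
  intro Y _
  by_cases h : A Y <;> simp [h]

/-- set of potential s-dimensional faces -/
noncomputable def Iset (n s : ℕ) : Finset (Finset (Fin n)) :=
  univ.filter (fun σ => σ.card = s + 1)

lemma card_Iset (n s : ℕ) : (Iset n s).card = n.choose (s + 1) := by
  rw [Iset, show (univ.filter (fun σ : Finset (Fin n) => σ.card = s + 1))
    = (univ : Finset (Fin n)).powersetCard (s + 1) from ?_]
  · rw [Finset.card_powersetCard, Finset.card_univ, Fintype.card_fin]
  · ext σ
    simp [Finset.mem_powersetCard]

lemma mem_Iset {n s : ℕ} {σ : Finset (Fin n)} : σ ∈ Iset n s ↔ σ.card = s + 1 := by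
  simp [Iset]

lemma X_eq {n : ℕ} (s : ℕ) (Y : Finset (Finset (Fin n))) :
    (fCount Y s : ℝ) = ∑ σ ∈ Iset n s, if σ ∈ Y then (1:ℝ) else 0 := by
  rw [Finset.sum_boole]
  congr 1
  unfold fCount
  congr 1
  ext σ
  rw [Finset.mem_filter, Finset.mem_filter, mem_Iset]
  tauto

lemma first_moment {n : ℕ} (p : ℕ → ℝ) (k s : ℕ) (hk : s + 1 ≤ k) :
    ∑ Y ∈ Cpx n k, wt n k p Y * (fCount Y s : ℝ)
      = (n.choose (s + 1) : ℝ) * ∏ i ∈ Finset.range k, p i ^ ((s + 1).choose (i + 1)) := by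
  rw [Finset.sum_congr rfl (fun Y (_ : Y ∈ Cpx n k) => by rw [X_eq s Y, Finset.mul_sum]),
    Finset.sum_comm]
  have hterm : ∀ σ ∈ Iset n s, ∑ Y ∈ Cpx n k, wt n k p Y * (if σ ∈ Y then (1:ℝ) else 0)
      = ∏ i ∈ Finset.range k, p i ^ ((s + 1).choose (i + 1)) := by
    intro σ hσ
    rw [mem_Iset] at hσ
    rw [sum_mul_ind]
    rw [prob_face p σ (by rw [← Finset.card_pos, hσ]; omega) (by omega), hσ]
  rw [Finset.sum_congr rfl hterm, Finset.sum_const, nsmul_eq_mul, card_Iset]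

lemma second_moment {n : ℕ} (p : ℕ → ℝ) (k s : ℕ) (hk : s + 1 ≤ k) :
    ∑ Y ∈ Cpx n k, wt n k p Y * (fCount Y s : ℝ) ^ 2
      = ∑ σ ∈ Iset n s, ∑ τ ∈ Iset n s,
          ∏ i ∈ Finset.range k, p i ^ fCount (cl σ ∪ cl τ) i := by
  have expand : ∀ Y ∈ Cpx n k, wt n k p Y * (fCount Y s : ℝ) ^ 2
      = ∑ σ ∈ Iset n s, ∑ τ ∈ Iset n s,
          wt n k p Y * (if σ ∈ Y ∧ τ ∈ Y then (1:ℝ) else 0) := by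
    intro Y _
    rw [sq, X_eq s Y, Finset.sum_mul_sum]
    rw [Finset.mul_sum]
    apply Finset.sum_congr rfl
    intro σ _
    rw [Finset.mul_sum]
    apply Finset.sum_congr rfl
    intro τ _
    by_cases h1 : σ ∈ Y <;> by_cases h2 : τ ∈ Y <;> simp [h1, h2]
  rw [Finset.sum_congr rfl expand, Finset.sum_comm]
  apply Finset.sum_congr rfl
  intro σ hσ
  rw [Finset.sum_comm]
  apply Finset.sum_congr rfl
  intro τ hτ
  rw [mem_Iset] at hσ hτ
  rw [sum_mul_ind]
  exact prob_face2 p σ τ (by rw [← Finset.card_pos, hσ]; omega)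
    (by rw [← Finset.card_pos, hτ]; omega) (by omega) (by omega)

lemma prod_p_pow (x : ℝ) (hx : 0 < x) (α : ℕ → ℝ) (c : ℕ → ℕ) (k : ℕ) :
    ∏ i ∈ Finset.range k, (x ^ (-α i)) ^ (c i)
      = x ^ (-(∑ i ∈ Finset.range k, (c i : ℝ) * α i)) := by
  have he : ∀ i, (x ^ (-α i)) ^ (c i) = x ^ (-((c i : ℝ) * α i)) := fun i => by
    rw [← Real.rpow_natCast (x ^ (-α i)) (c i), ← Real.rpow_mul (le_of_lt hx)]
    congr 1
    ring
  rw [Finset.prod_congr rfl (fun i _ => he i), ← Real.rpow_sum_of_pos hx]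
  congr 1
  rw [← Finset.sum_neg_distrib]

lemma choose_mul_mono (i : ℕ) : ∀ (j k : ℕ), j ≤ k → j.choose (i+1) * k ≤ k.choose (i+1) * j := by
  intro j k hjk
  match j, k with
  | 0, k => simp [Nat.choose_eq_zero_of_lt (Nat.succ_pos i)]
  | jj+1, kk+1 =>
    have h1 := Nat.add_one_mul_choose_eq jj i
    have h2 := Nat.add_one_mul_choose_eq kk i
    have h3 : jj.choose i ≤ kk.choose i := Nat.choose_le_choose i (by omega)
    apply Nat.le_of_mul_le_mul_right _ (Nat.succ_pos i)
    calc (jj+1).choose (i+1) * (kk+1) * (i+1)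
        = ((jj+1) * jj.choose i) * (kk+1) := by rw [h1]; ring
      _ ≤ ((jj+1) * kk.choose i) * (kk+1) :=
          Nat.mul_le_mul_right _ (Nat.mul_le_mul_left _ h3)
      _ = ((kk+1) * kk.choose i) * (jj+1) := by ring
      _ = (kk+1).choose (i+1) * (jj+1) * (i+1) := by rw [h2]; ring

lemma pair_count (n s j : ℕ) :
    (((Iset n s) ×ˢ (Iset n s)).filter (fun στ : Finset (Fin n) × Finset (Fin n) =>
        (στ.1 ∩ στ.2).card = j)).card
      ≤ n.choose (s+1) * ((s+1).choose j * n.choose (s+1-j)) := by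
  have hb : ((Iset n s).sigma (fun σ => (σ.powersetCard j) ×ˢ
      ((univ : Finset (Fin n)).powersetCard (s+1-j)))).card
      = n.choose (s+1) * ((s+1).choose j * n.choose (s+1-j)) := by
    rw [Finset.card_sigma]
    have he : ∀ σ ∈ Iset n s, ((σ.powersetCard j) ×ˢ
        ((univ : Finset (Fin n)).powersetCard (s+1-j))).card
        = (s+1).choose j * n.choose (s+1-j) := by
      intro σ hσ
      rw [Finset.card_product, Finset.card_powersetCard, Finset.card_powersetCard,
        mem_Iset.mp hσ, Finset.card_univ, Fintype.card_fin]
    rw [Finset.sum_congr rfl he, Finset.sum_const, smul_eq_mul, card_Iset]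
  rw [← hb]
  apply Finset.card_le_card_of_injOn
    (fun στ => ⟨στ.1, (στ.1 ∩ στ.2, στ.2 \ στ.1)⟩)
  · rintro ⟨σ, τ⟩ h
    rw [Finset.mem_coe, Finset.mem_filter, Finset.mem_product] at h
    obtain ⟨⟨hσ, hτ⟩, hj⟩ := h
    change (σ ∩ τ).card = j at hj
    rw [Finset.mem_coe, Finset.mem_sigma, Finset.mem_product, Finset.mem_powersetCard, Finset.mem_powersetCard]
    refine ⟨hσ, ⟨Finset.inter_subset_left, hj⟩, Finset.subset_univ _, ?_⟩
    have h4 := Finset.card_sdiff_add_card_inter τ σ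
    rw [Finset.inter_comm τ σ] at h4
    rw [mem_Iset] at hτ
    show (τ \ σ).card = s + 1 - j
    have hj' : (σ ∩ τ).card = j := hj
    have hτ' : τ.card = s + 1 := hτ
    have hle : (σ ∩ τ).card ≤ τ.card := Finset.card_le_card Finset.inter_subset_right
    omega
  · rintro ⟨σ, τ⟩ h ⟨σ', τ'⟩ h' heq
    injection heq with h1 h2
    have h1' : σ = σ' := h1
    subst h1'
    have h2' : (σ ∩ τ, τ \ σ) = (σ ∩ τ', τ' \ σ) := h2
    have h5 : σ ∩ τ = σ ∩ τ' := congrArg Prod.fst h2'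
    have h6 : τ \ σ = τ' \ σ := congrArg Prod.snd h2'
    have hττ' : τ = τ' := by
      ext a
      constructor
      · intro ha
        by_cases hσa : a ∈ σ
        · have hm : a ∈ σ ∩ τ' := by rw [← h5]; exact Finset.mem_inter.mpr ⟨hσa, ha⟩
          exact (Finset.mem_inter.mp hm).2
        · have hm : a ∈ τ' \ σ := by rw [← h6]; exact Finset.mem_sdiff.mpr ⟨ha, hσa⟩
          exact (Finset.mem_sdiff.mp hm).1
      · intro ha
        by_cases hσa : a ∈ σ
        · have hm : a ∈ σ ∩ τ := by rw [h5]; exact Finset.mem_inter.mpr ⟨hσa, ha⟩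
          exact (Finset.mem_inter.mp hm).2
        · have hm : a ∈ τ \ σ := by rw [h6]; exact Finset.mem_sdiff.mpr ⟨ha, hσa⟩
          exact (Finset.mem_sdiff.mp hm).1
    rw [hττ']

lemma choose_lower (s n : ℕ) (hn : 2*s+4 ≤ n) :
    ((n:ℝ)) ^ (s+1) ≤ (n.choose (s+1) : ℝ) * ((s+1).factorial * 2^(s+1)) := by
  have h1 : ((n - s - 1 : ℕ) : ℝ) ^ (s+1) / ((s+1).factorial : ℝ)
      ≤ ((n-1).choose (s+1) : ℝ) := by
    have h := Nat.pow_le_choose (α := ℝ) (s+1) (n-1)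
    have e : n - 1 + 1 - (s+1) = n - s - 1 := by omega
    rwa [e] at h
  have h2 : ((n-1).choose (s+1) : ℝ) ≤ (n.choose (s+1) : ℝ) :=
    Nat.cast_le.mpr (Nat.choose_le_choose _ (by omega))
  have h3 : (n:ℝ) ≤ 2 * ((n - s - 1 : ℕ):ℝ) := by
    have hh : n ≤ 2 * (n - s - 1) := by omega
    have h2 : ((n:ℕ):ℝ) ≤ ((2 * (n - s - 1):ℕ):ℝ) := Nat.cast_le.mpr hh
    push_cast at h2
    linarith
  have h4 : (n:ℝ)^(s+1) ≤ (2 * ((n - s - 1 : ℕ):ℝ))^(s+1) :=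
    pow_le_pow_left₀ (Nat.cast_nonneg n) h3 _
  rw [mul_pow] at h4
  have hfac : (0:ℝ) < ((s+1).factorial : ℝ) := by positivity
  have h5 : ((n - s - 1 : ℕ) : ℝ) ^ (s+1) ≤ (n.choose (s+1) : ℝ) * ((s+1).factorial : ℝ) := by
    rw [div_le_iff₀ hfac] at h1
    calc ((n - s - 1 : ℕ) : ℝ) ^ (s+1) ≤ ((n-1).choose (s+1) : ℝ) * ((s+1).factorial : ℝ) := h1
      _ ≤ (n.choose (s+1) : ℝ) * ((s+1).factorial : ℝ) :=
          mul_le_mul_of_nonneg_right h2 (le_of_lt hfac)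
  calc (n:ℝ)^(s+1) ≤ 2^(s+1) * ((n - s - 1 : ℕ):ℝ)^(s+1) := h4
    _ ≤ 2^(s+1) * ((n.choose (s+1) : ℝ) * ((s+1).factorial : ℝ)) := by
        apply mul_le_mul_of_nonneg_left h5 (by positivity)
    _ = (n.choose (s+1) : ℝ) * ((s+1).factorial * 2^(s+1)) := by ring

lemma b_le (α : ℕ → ℝ) (hα : ∀ i, 0 ≤ α i) (r s j : ℕ) (hj : j ≤ s+1) :
    (∑ i ∈ Finset.range (r+1), ((j.choose (i+1)):ℝ) * α i) * (s+1)
      ≤ (∑ i ∈ Finset.range (r+1), (((s+1).choose (i+1)):ℝ) * α i) * j := by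
  rw [Finset.sum_mul, Finset.sum_mul]
  apply Finset.sum_le_sum
  intro i _
  have h := choose_mul_mono i j (s+1) hj
  calc ((j.choose (i+1)):ℝ) * α i * (s+1) = ((j.choose (i+1) * (s+1) : ℕ):ℝ) * α i := by
        push_cast; ring
    _ ≤ (((s+1).choose (i+1) * j : ℕ):ℝ) * α i :=
        mul_le_mul_of_nonneg_right (Nat.cast_le.mpr h) (hα i)
    _ = (((s+1).choose (i+1)):ℝ) * α i * j := by push_cast; ring

lemma sum_shrink (r k : ℕ) (hk : k ≤ r+1) (hk0 : 1 ≤ k) (α : ℕ → ℝ) :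
    ∑ i ∈ Finset.range (r+1), ((k.choose (i+1)):ℝ) * α i
      = (∑ i ∈ Finset.range k, ((k.choose (i+1)):ℝ) / k * α i) * k := by
  rw [Finset.sum_mul]
  rw [← Finset.sum_subset (Finset.range_subset_range.mpr hk)]
  · apply Finset.sum_congr rfl
    intro i _
    have hknz : (k:ℝ) ≠ 0 := by positivity
    field_simp
  · intro i hir hik
    rw [Finset.mem_range] at hik
    rw [Nat.choose_eq_zero_of_lt (by omega)]
    simp

lemma sum_union_le {ι : Type*} [DecidableEq ι] (A B : Finset ι) (w : ι → ℝ)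
    (hw : ∀ Y, 0 ≤ w Y) : ∑ Y ∈ A ∪ B, w Y ≤ ∑ Y ∈ A, w Y + ∑ Y ∈ B, w Y := by
  have h := Finset.sum_union_inter (s₁ := A) (s₂ := B) (f := w)
  have h2 : 0 ≤ ∑ Y ∈ A ∩ B, w Y := Finset.sum_nonneg (fun Y _ => hw Y)
  linarith

lemma bad2_bound (r s n : ℕ) (hs : s + 1 ≤ r) (α : ℕ → ℝ) (hα : ∀ i, 0 ≤ α i)
    (hn : 1 ≤ n) :
    ∑ Y ∈ (Cpx n (r+1)).filter (fun Y => ∃ σ ∈ Y, σ.card = s + 2),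
        wt n (r+1) (fun i => (n:ℝ) ^ (-α i)) Y
      ≤ (n:ℝ) ^ ((s+2:ℝ) - (∑ i ∈ Finset.range (r+1), (((s+2).choose (i+1)):ℝ) * α i)) := by
  have hx0 : (0:ℝ) < n := by exact_mod_cast Nat.pos_of_ne_zero (by omega)
  have hx1 : (1:ℝ) ≤ n := by exact_mod_cast hn
  set p : ℕ → ℝ := fun i => (n:ℝ) ^ (-α i) with hpdef
  have hp0 : ∀ i, 0 ≤ p i := fun i => Real.rpow_nonneg (le_of_lt hx0) _
  have hp1 : ∀ i, p i ≤ 1 := fun i =>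
    Real.rpow_le_one_of_one_le_of_nonpos hx1 (neg_nonpos.mpr (hα i))
  have hw0 : ∀ Y, 0 ≤ wt n (r+1) p Y := wt_nonneg p hp0 hp1 (r+1)
  have hub := union_bound (Cpx n (r+1)) (wt n (r+1) p) (fun Y _ => hw0 Y)
    (fun Y => ∃ σ ∈ Y, σ.card = s + 2) (Iset n (s+1)) (fun σ Y => σ ∈ Y)
    (by
      rintro Y _ ⟨σ, hσY, hσc⟩
      exact ⟨σ, mem_Iset.mpr hσc, hσY⟩)
  apply le_trans hub
  have hterm : ∀ σ ∈ Iset n (s+1),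
      ∑ Y ∈ (Cpx n (r+1)).filter (fun Y => σ ∈ Y), wt n (r+1) p Y
        = (n:ℝ) ^ (-(∑ i ∈ Finset.range (r+1), (((s+2).choose (i+1)):ℝ) * α i)) := by
    intro σ hσ
    rw [mem_Iset] at hσ
    rw [prob_face p σ (by rw [← Finset.card_pos, hσ]; omega) (by omega), hσ]
    exact prod_p_pow (n:ℝ) hx0 α _ (r+1)
  rw [Finset.sum_congr rfl hterm, Finset.sum_const, nsmul_eq_mul, card_Iset]
  have hc : ((n.choose (s+2)):ℝ) ≤ (n:ℝ) ^ ((s+2:ℝ)) := by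
    rw [show ((s+2:ℝ)) = ((s+2 : ℕ):ℝ) by push_cast; ring, Real.rpow_natCast]
    exact_mod_cast Nat.choose_le_pow n (s+2)
  calc ((n.choose (s+2)):ℝ) * (n:ℝ) ^ (-(∑ i ∈ Finset.range (r+1), (((s+2).choose (i+1)):ℝ) * α i))
      ≤ (n:ℝ) ^ ((s+2:ℝ)) * (n:ℝ) ^ (-(∑ i ∈ Finset.range (r+1), (((s+2).choose (i+1)):ℝ) * α i)) :=
        mul_le_mul_of_nonneg_right hc (Real.rpow_nonneg (le_of_lt hx0) _)
    _ = (n:ℝ) ^ ((s+2:ℝ) - (∑ i ∈ Finset.range (r+1), (((s+2).choose (i+1)):ℝ) * α i)) := by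
        rw [← Real.rpow_add hx0]
        congr 1

lemma perj_bound (s n j : ℕ) (hn : 2*s+4 ≤ n) (hj1 : 1 ≤ j) (hj2 : j ≤ s+1) (D bj : ℝ)
    (hD : D < 1) (hbj : bj ≤ (j:ℝ) * D) :
    ((s+1).choose j : ℝ) * (n.choose (s+1-j) : ℝ) * (n:ℝ) ^ bj
      ≤ (n.choose (s+1) : ℝ) *
        (((s+1:ℝ)^(s+1) * (((s+1).factorial : ℝ) * 2^(s+1))) * (n:ℝ) ^ (-(1-D))) := by
  set x : ℝ := (n:ℝ) with hxdef
  have hx0 : (0:ℝ) < x := by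
    rw [hxdef]; exact_mod_cast Nat.pos_of_ne_zero (by omega)
  have hx1 : (1:ℝ) ≤ x := by
    rw [hxdef]; exact_mod_cast (by omega : 1 ≤ n)
  have t1 : ((s+1).choose j : ℝ) ≤ (s+1:ℝ)^(s+1) := by
    have h1 : (s+1).choose j ≤ (s+1)^j := Nat.choose_le_pow (s+1) j
    have h2 : (s+1)^j ≤ (s+1)^(s+1) := Nat.pow_le_pow_right (by omega) hj2
    calc ((s+1).choose j : ℝ) ≤ (((s+1)^(s+1) : ℕ) : ℝ) := by exact_mod_cast le_trans h1 h2
      _ = (s+1:ℝ)^(s+1) := by push_cast; ring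
  have t2 : (n.choose (s+1-j) : ℝ) ≤ x ^ (((s+1-j:ℕ)):ℝ) := by
    rw [Real.rpow_natCast]
    rw [hxdef]
    exact_mod_cast Nat.choose_le_pow n (s+1-j)
  have t3 : x ^ bj ≤ x ^ ((j:ℝ)*D) := Real.rpow_le_rpow_of_exponent_le hx1 hbj
  have t4 : x ^ (((s+1-j:ℕ)):ℝ) * x ^ ((j:ℝ)*D) = x ^ (((s+1:ℕ)):ℝ) * x ^ ((j:ℝ)*(D-1)) := by
    rw [← Real.rpow_add hx0, ← Real.rpow_add hx0]
    congr 1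
    rw [Nat.cast_sub hj2]
    push_cast
    ring
  have t5 : x ^ ((j:ℝ)*(D-1)) ≤ x ^ (-(1-D)) := by
    apply Real.rpow_le_rpow_of_exponent_le hx1
    have hj1' : (1:ℝ) ≤ (j:ℝ) := by exact_mod_cast hj1
    nlinarith
  have t6 : x ^ (((s+1:ℕ)):ℝ) ≤ (n.choose (s+1) : ℝ) * (((s+1).factorial : ℝ) * 2^(s+1)) := by
    rw [Real.rpow_natCast, hxdef]
    exact choose_lower s n hn
  calc ((s+1).choose j : ℝ) * (n.choose (s+1-j) : ℝ) * x ^ bj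
      ≤ ((s+1:ℝ)^(s+1) * (x ^ (((s+1-j:ℕ)):ℝ))) * x ^ ((j:ℝ)*D) := by
        apply mul_le_mul _ t3 (Real.rpow_nonneg (le_of_lt hx0) _) (by positivity)
        exact mul_le_mul t1 t2 (Nat.cast_nonneg _) (by positivity)
    _ = (s+1:ℝ)^(s+1) * (x ^ (((s+1:ℕ)):ℝ) * x ^ ((j:ℝ)*(D-1))) := by
        rw [mul_assoc, t4]
    _ ≤ (s+1:ℝ)^(s+1) * (((n.choose (s+1) : ℝ) * (((s+1).factorial : ℝ) * 2^(s+1))) * x ^ (-(1-D))) := by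
        apply mul_le_mul_of_nonneg_left _ (by positivity)
        exact mul_le_mul t6 t5 (Real.rpow_nonneg (le_of_lt hx0) _) (by positivity)
    _ = (n.choose (s+1) : ℝ) *
        (((s+1:ℝ)^(s+1) * (((s+1).factorial : ℝ) * 2^(s+1))) * x ^ (-(1-D))) := by ring

lemma bad1_bound (r s n : ℕ) (hs : s + 1 ≤ r) (α : ℕ → ℝ) (hα : ∀ i, 0 ≤ α i)
    (hD : ∑ i ∈ Finset.range (s + 1), ((s + 1).choose (i + 1) : ℝ) / (s + 1) * α i < 1)
    (hn : 2*s + 4 ≤ n) :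
    ∑ Y ∈ (Cpx n (r+1)).filter (fun Y => (fCount Y s : ℝ) = 0),
        wt n (r+1) (fun i => (n:ℝ) ^ (-α i)) Y
      ≤ ((s+1:ℝ) * ((s+1:ℝ)^(s+1) * (((s+1).factorial : ℝ) * 2^(s+1))))
        * (n:ℝ) ^ (-(1 - ∑ i ∈ Finset.range (s + 1),
            ((s + 1).choose (i + 1) : ℝ) / (s + 1) * α i)) := by
  set D := ∑ i ∈ Finset.range (s + 1), ((s + 1).choose (i + 1) : ℝ) / (s + 1) * α i with hDdef
  set x : ℝ := (n:ℝ) with hxdef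
  have hx0 : (0:ℝ) < x := by rw [hxdef]; exact_mod_cast Nat.pos_of_ne_zero (by omega)
  have hx1 : (1:ℝ) ≤ x := by rw [hxdef]; exact_mod_cast (by omega : 1 ≤ n)
  set p : ℕ → ℝ := fun i => x ^ (-α i) with hpdef
  have hp0 : ∀ i, 0 ≤ p i := fun i => Real.rpow_nonneg (le_of_lt hx0) _
  have hp1 : ∀ i, p i ≤ 1 := fun i =>
    Real.rpow_le_one_of_one_le_of_nonpos hx1 (neg_nonpos.mpr (hα i))
  have hw0 : ∀ Y, 0 ≤ wt n (r+1) p Y := wt_nonneg p hp0 hp1 (r+1)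
  have htot := total_one (n := n) p (r+1)
  -- exponents
  set a := ∑ i ∈ Finset.range (r+1), (((s+1).choose (i+1)):ℝ) * α i with hadef
  have ha : a = D * (s+1) := by
    rw [hadef, hDdef]
    exact_mod_cast sum_shrink r (s+1) (by omega) (by omega) α
  set b : ℕ → ℝ := fun j => ∑ i ∈ Finset.range (r+1), ((j.choose (i+1)):ℝ) * α i with hbdef
  have hb0 : b 0 = 0 := by
    rw [hbdef]
    apply Finset.sum_eq_zero
    intro i _
    simp
  have hbD : ∀ j, 1 ≤ j → j ≤ s+1 → b j ≤ (j:ℝ) * D := by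
    intro j h1 h2
    have hb : b j * ((s:ℝ)+1) ≤ a * (j:ℝ) := b_le α hα r s j h2
    rw [ha] at hb
    have hsp : (0:ℝ) < (s:ℝ)+1 := by positivity
    nlinarith
  -- first moment
  set Nc := ((n.choose (s+1)):ℝ) with hNcdef
  have hNc0 : (0:ℝ) < Nc := by
    rw [hNcdef]
    exact_mod_cast Nat.choose_pos (by omega : s+1 ≤ n)
  have hE1 : ∏ i ∈ Finset.range (r+1), p i ^ ((s+1).choose (i+1)) = x ^ (-a) := by
    rw [hpdef, hadef]
    exact prod_p_pow x hx0 α _ (r+1)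
  have hm : ∑ Y ∈ Cpx n (r+1), wt n (r+1) p Y * (fCount Y s : ℝ) = Nc * x ^ (-a) := by
    rw [first_moment p (r+1) s (by omega), hE1, hNcdef]
  -- chebyshev
  have hch := cheb (Cpx n (r+1)) (wt n (r+1) p) (fun Y _ => hw0 Y) htot
    (fun Y => (fCount Y s : ℝ))
  rw [hm] at hch
  -- second moment rewritten
  set T := (Iset n s) ×ˢ (Iset n s) with hTdef
  have hpair : ∀ στ ∈ T,
      ∏ i ∈ Finset.range (r+1), p i ^ fCount (cl στ.1 ∪ cl στ.2) i
        = x ^ (-(2*a - b ((στ.1 ∩ στ.2).card))) := by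
    rintro ⟨σ, τ⟩ hστ
    rw [hTdef, Finset.mem_product] at hστ
    have hσc := mem_Iset.mp hστ.1
    have hτc := mem_Iset.mp hστ.2
    rw [hpdef, prod_p_pow x hx0 α (fun i => fCount (cl σ ∪ cl τ) i) (r+1)]
    congr 1
    have hι : ∀ i, ((fCount (cl σ ∪ cl τ) i : ℕ):ℝ)
        = 2*(((s+1).choose (i+1)):ℝ) - (((σ ∩ τ).card.choose (i+1)):ℝ) := by
      intro i
      have h := fCount_cl_union σ τ i
      rw [hσc, hτc] at h
      have h2 : ((fCount (cl σ ∪ cl τ) i : ℕ):ℝ) + (((σ ∩ τ).card.choose (i+1) : ℕ):ℝ)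
          = (((s+1).choose (i+1) : ℕ):ℝ) + (((s+1).choose (i+1) : ℕ):ℝ) := by exact_mod_cast h
      linarith
    have hsum : ∑ i ∈ Finset.range (r+1), ((fCount (cl σ ∪ cl τ) i : ℕ):ℝ) * α i
        = 2*a - b ((σ ∩ τ).card) := by
      rw [hadef, hbdef, Finset.mul_sum, ← Finset.sum_sub_distrib]
      apply Finset.sum_congr rfl
      intro i _
      rw [hι i]
      ring
    rw [hsum]
  have hE2 : ∑ Y ∈ Cpx n (r+1), wt n (r+1) p Y * (fCount Y s : ℝ)^2
      = ∑ στ ∈ T, x ^ (-(2*a - b ((στ.1 ∩ στ.2).card))) := by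
    rw [second_moment p (r+1) s (by omega), ← Finset.sum_product']
    exact Finset.sum_congr rfl hpair
  rw [hE2] at hch
  -- m² as sum of constants over T
  have hm2 : (Nc * x ^ (-a))^2 = (T.card : ℝ) * x ^ (-(2*a)) := by
    rw [hTdef, Finset.card_product, card_Iset]
    push_cast
    rw [← hNcdef, show (-(2*a)) = (-a) + (-a) by ring, Real.rpow_add hx0]
    ring
  -- difference bound
  have hdiff : (∑ στ ∈ T, x ^ (-(2*a - b ((στ.1 ∩ στ.2).card)))) - (Nc * x ^ (-a))^2
      ≤ ∑ στ ∈ T.filter (fun στ => 1 ≤ (στ.1 ∩ στ.2).card),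
          x ^ (-(2*a)) * x ^ (b ((στ.1 ∩ στ.2).card)) := by
    rw [hm2, show ((T.card : ℝ) * x ^ (-(2*a)))
      = ∑ _στ ∈ T, x ^ (-(2*a)) by rw [Finset.sum_const, nsmul_eq_mul],
      ← Finset.sum_sub_distrib]
    have hper : ∀ στ ∈ T, x ^ (-(2*a - b ((στ.1 ∩ στ.2).card))) - x ^ (-(2*a))
        ≤ (if 1 ≤ (στ.1 ∩ στ.2).card
            then x ^ (-(2*a)) * x ^ (b ((στ.1 ∩ στ.2).card)) else 0) := by
      intro στ hστ
      by_cases hj : 1 ≤ (στ.1 ∩ στ.2).card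
      · rw [if_pos hj]
        have he : x ^ (-(2*a - b ((στ.1 ∩ στ.2).card)))
            = x ^ (-(2*a)) * x ^ (b ((στ.1 ∩ στ.2).card)) := by
          rw [← Real.rpow_add hx0]
          congr 1
          ring
        rw [he]
        exact sub_le_self _ (Real.rpow_nonneg (le_of_lt hx0) _)
      · rw [if_neg hj]
        have hj0 : (στ.1 ∩ στ.2).card = 0 := by omega
        have he : -(2*a - b ((στ.1 ∩ στ.2).card)) = -(2*a) := by rw [hj0, hb0]; ring
        rw [he, sub_self]
    calc ∑ στ ∈ T, (x ^ (-(2*a - b ((στ.1 ∩ στ.2).card))) - x ^ (-(2*a)))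
        ≤ ∑ στ ∈ T, (if 1 ≤ (στ.1 ∩ στ.2).card
            then x ^ (-(2*a)) * x ^ (b ((στ.1 ∩ στ.2).card)) else 0) :=
          Finset.sum_le_sum hper
      _ = ∑ στ ∈ T.filter (fun στ => 1 ≤ (στ.1 ∩ στ.2).card),
            x ^ (-(2*a)) * x ^ (b ((στ.1 ∩ στ.2).card)) := (Finset.sum_filter _ _).symm
  -- fiberwise grouping
  have hmap : ∀ στ ∈ T.filter (fun στ => 1 ≤ (στ.1 ∩ στ.2).card),
      (στ.1 ∩ στ.2).card ∈ Finset.Icc 1 (s+1) := by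
    rintro ⟨σ, τ⟩ h
    rw [Finset.mem_filter, hTdef, Finset.mem_product] at h
    rw [Finset.mem_Icc]
    refine ⟨h.2, ?_⟩
    have h1 : (σ ∩ τ).card ≤ σ.card := Finset.card_le_card Finset.inter_subset_left
    rw [mem_Iset.mp h.1.1] at h1
    exact h1
  have hfib := Finset.sum_fiberwise_of_maps_to hmap
    (fun στ => x ^ (-(2*a)) * x ^ (b ((στ.1 ∩ στ.2).card)))
  -- bound each fiber
  have hfiber : ∀ jj ∈ Finset.Icc 1 (s+1),
      ∑ στ ∈ (T.filter (fun στ => 1 ≤ (στ.1 ∩ στ.2).card)).filter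
          (fun στ => (στ.1 ∩ στ.2).card = jj),
          x ^ (-(2*a)) * x ^ (b ((στ.1 ∩ στ.2).card))
        ≤ (Nc * (((s+1).choose jj : ℝ) * ((n.choose (s+1-jj)):ℝ)))
          * (x ^ (-(2*a)) * x ^ (b jj)) := by
    intro jj hjj
    have hval : ∀ στ ∈ (T.filter (fun στ => 1 ≤ (στ.1 ∩ στ.2).card)).filter
        (fun στ => (στ.1 ∩ στ.2).card = jj),
        x ^ (-(2*a)) * x ^ (b ((στ.1 ∩ στ.2).card)) = x ^ (-(2*a)) * x ^ (b jj) := by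
      intro στ hστ
      rw [Finset.mem_filter] at hστ
      rw [hστ.2]
    rw [Finset.sum_congr rfl hval, Finset.sum_const, nsmul_eq_mul]
    apply mul_le_mul_of_nonneg_right _ (by positivity)
    have hsub : (T.filter (fun στ => 1 ≤ (στ.1 ∩ στ.2).card)).filter
        (fun στ => (στ.1 ∩ στ.2).card = jj) ⊆ T.filter (fun στ => (στ.1 ∩ στ.2).card = jj) := by
      intro στ h
      rw [Finset.mem_filter] at h ⊢
      exact ⟨(Finset.mem_filter.mp h.1).1, h.2⟩
    have hcard := le_trans (Finset.card_le_card hsub) (pair_count n s jj)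
    calc (((T.filter (fun στ => 1 ≤ (στ.1 ∩ στ.2).card)).filter
          (fun στ => (στ.1 ∩ στ.2).card = jj)).card : ℝ)
        ≤ ((n.choose (s+1) * ((s+1).choose jj * n.choose (s+1-jj)) : ℕ) : ℝ) := by
          exact_mod_cast hcard
      _ = Nc * (((s+1).choose jj : ℝ) * ((n.choose (s+1-jj)):ℝ)) := by
          rw [hNcdef]; push_cast; ring
  -- assemble
  set K' := ((s+1:ℝ)^(s+1) * (((s+1).factorial : ℝ) * 2^(s+1))) with hK'def
  have hjbound : ∀ jj ∈ Finset.Icc 1 (s+1),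
      (Nc * (((s+1).choose jj : ℝ) * ((n.choose (s+1-jj)):ℝ))) * (x ^ (-(2*a)) * x ^ (b jj))
        ≤ x ^ (-(2*a)) * (Nc * (Nc * (K' * x ^ (-(1-D))))) := by
    intro jj hjj
    rw [Finset.mem_Icc] at hjj
    have hpj := perj_bound s n jj hn hjj.1 hjj.2 D (b jj) hD (hbD jj hjj.1 hjj.2)
    rw [← hNcdef, ← hK'def, ← hxdef] at hpj
    calc (Nc * (((s+1).choose jj : ℝ) * ((n.choose (s+1-jj)):ℝ))) * (x ^ (-(2*a)) * x ^ (b jj))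
        = (x ^ (-(2*a)) * Nc) * ((((s+1).choose jj : ℝ) * ((n.choose (s+1-jj)):ℝ)) * x ^ (b jj)) := by
          ring
      _ ≤ (x ^ (-(2*a)) * Nc) * (Nc * (K' * x ^ (-(1-D)))) :=
          mul_le_mul_of_nonneg_left hpj (by positivity)
      _ = x ^ (-(2*a)) * (Nc * (Nc * (K' * x ^ (-(1-D))))) := by ring
  -- combine everything
  have hvar : (∑ στ ∈ T, x ^ (-(2*a - b ((στ.1 ∩ στ.2).card)))) - (Nc * x ^ (-a))^2
      ≤ (Nc * x ^ (-a))^2 * (((s+1:ℝ)) * (K' * x ^ (-(1-D)))) := by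
    apply le_trans hdiff
    rw [← hfib]
    calc ∑ jj ∈ Finset.Icc 1 (s+1), ∑ στ ∈ (T.filter (fun στ => 1 ≤ (στ.1 ∩ στ.2).card)).filter
          (fun στ => (στ.1 ∩ στ.2).card = jj), x ^ (-(2*a)) * x ^ (b ((στ.1 ∩ στ.2).card))
        ≤ ∑ jj ∈ Finset.Icc 1 (s+1),
            x ^ (-(2*a)) * (Nc * (Nc * (K' * x ^ (-(1-D))))) := by
          apply Finset.sum_le_sum
          intro jj hjj
          exact le_trans (hfiber jj hjj) (hjbound jj hjj)
      _ = ((s+1:ℝ)) * (x ^ (-(2*a)) * (Nc * (Nc * (K' * x ^ (-(1-D)))))) := by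
          rw [Finset.sum_const, Nat.card_Icc, nsmul_eq_mul]
          norm_num
      _ = (Nc * x ^ (-a))^2 * (((s+1:ℝ)) * (K' * x ^ (-(1-D)))) := by
          rw [show ((Nc * x ^ (-a))^2) = Nc^2 * (x ^ (-a) * x ^ (-a)) by ring,
            ← Real.rpow_add hx0]
          rw [show (-a + -a) = -(2*a) by ring]
          ring
  have hm2pos : (0:ℝ) < (Nc * x ^ (-a))^2 := by
    apply pow_pos
    exact mul_pos hNc0 (Real.rpow_pos_of_pos hx0 _)
  have hfinal := le_trans hch hvar
  have hBad1 : ∑ Y ∈ (Cpx n (r+1)).filter (fun Y => (fCount Y s : ℝ) = 0), wt n (r+1) p Y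
      ≤ (((s:ℝ)+1) * (K' * x ^ (-(1-D)))) := by
    have h2 : (∑ Y ∈ (Cpx n (r+1)).filter (fun Y => (fCount Y s : ℝ) = 0), wt n (r+1) p Y)
        * (Nc * x ^ (-a))^2
        ≤ ((((s:ℝ)+1) * (K' * x ^ (-(1-D))))) * (Nc * x ^ (-a))^2 := by
      apply le_trans hfinal
      apply le_of_eq
      ring
    exact le_of_mul_le_mul_right h2 hm2pos
  apply le_trans hBad1
  apply le_of_eq
  ring

lemma per_n (r s n : ℕ) (α : ℕ → ℝ) (hα : ∀ i, 0 ≤ α i) (hn : 2*s + 4 ≤ n) :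
    (1 : ℝ) - (∑ Y ∈ (Cpx n (r+1)).filter (fun Y => (fCount Y s : ℝ) = 0),
          wt n (r+1) (fun i => (n:ℝ) ^ (-α i)) Y
        + ∑ Y ∈ (Cpx n (r+1)).filter (fun Y => ∃ σ ∈ Y, σ.card = s + 2),
          wt n (r+1) (fun i => (n:ℝ) ^ (-α i)) Y)
      ≤ ∑ Y ∈ (Cpx n (r+1)).filter
          (fun Y => (∃ σ ∈ Y, σ.card = s + 1) ∧ ∀ σ ∈ Y, σ.card ≤ s + 1),
          wt n (r+1) (fun i => (n:ℝ) ^ (-α i)) Y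
    ∧ ∑ Y ∈ (Cpx n (r+1)).filter
          (fun Y => (∃ σ ∈ Y, σ.card = s + 1) ∧ ∀ σ ∈ Y, σ.card ≤ s + 1),
          wt n (r+1) (fun i => (n:ℝ) ^ (-α i)) Y ≤ 1 := by
  have hx0 : (0:ℝ) < (n:ℝ) := by exact_mod_cast Nat.pos_of_ne_zero (by omega)
  have hx1 : (1:ℝ) ≤ (n:ℝ) := by exact_mod_cast (by omega : 1 ≤ n)
  set p : ℕ → ℝ := fun i => (n:ℝ) ^ (-α i) with hpdef
  have hp0 : ∀ i, 0 ≤ p i := fun i => Real.rpow_nonneg (le_of_lt hx0) _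
  have hp1 : ∀ i, p i ≤ 1 := fun i =>
    Real.rpow_le_one_of_one_le_of_nonpos hx1 (neg_nonpos.mpr (hα i))
  have hw0 : ∀ Y, 0 ≤ wt n (r+1) p Y := wt_nonneg p hp0 hp1 (r+1)
  have htot := total_one (n := n) p (r+1)
  set C := Cpx n (r+1) with hCdef
  set G := C.filter (fun Y => (∃ σ ∈ Y, σ.card = s + 1) ∧ ∀ σ ∈ Y, σ.card ≤ s + 1) with hGdef
  set B1 := C.filter (fun Y => (fCount Y s : ℝ) = 0) with hB1def
  set B2 := C.filter (fun Y => ∃ σ ∈ Y, σ.card = s + 2) with hB2def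
  have hupper : ∑ Y ∈ G, wt n (r+1) p Y ≤ 1 := by
    rw [← htot, hGdef]
    exact Finset.sum_le_sum_of_subset_of_nonneg (Finset.filter_subset _ _)
      (fun Y hY _ => hw0 Y)
  refine ⟨?_, hupper⟩
  have hcover : C ⊆ (G ∪ B1) ∪ B2 := by
    intro Y hY
    rw [Finset.mem_union, Finset.mem_union, hGdef, hB1def, hB2def,
      Finset.mem_filter, Finset.mem_filter, Finset.mem_filter]
    by_cases h1 : (fCount Y s : ℝ) = 0
    · exact Or.inl (Or.inr ⟨hY, h1⟩)
    by_cases h2 : ∀ σ ∈ Y, σ.card ≤ s+1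
    · refine Or.inl (Or.inl ⟨hY, ⟨?_, h2⟩⟩)
      have hne : fCount Y s ≠ 0 := by exact_mod_cast h1
      have hpos : 0 < (Y.filter (fun σ => σ.card = s + 1)).card := Nat.pos_of_ne_zero hne
      obtain ⟨σ, hσ⟩ := Finset.card_pos.mp hpos
      rw [Finset.mem_filter] at hσ
      exact ⟨σ, hσ.1, hσ.2⟩
    · refine Or.inr ⟨hY, ?_⟩
      push_neg at h2
      obtain ⟨σ, hσY, hσc⟩ := h2
      obtain ⟨τ, hτσ, hτc⟩ := Finset.exists_subset_card_eq (show s+2 ≤ σ.card by omega)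
      have hτY : τ ∈ Y := (mem_Cpx.mp (hCdef ▸ hY)).2 σ hσY τ hτσ
        (by rw [← Finset.card_pos, hτc]; omega)
      exact ⟨τ, hτY, hτc⟩
  have hsplit : ∑ Y ∈ C, wt n (r+1) p Y
      ≤ ∑ Y ∈ G, wt n (r+1) p Y + ∑ Y ∈ B1, wt n (r+1) p Y + ∑ Y ∈ B2, wt n (r+1) p Y := by
    calc ∑ Y ∈ C, wt n (r+1) p Y ≤ ∑ Y ∈ (G ∪ B1) ∪ B2, wt n (r+1) p Y :=
          Finset.sum_le_sum_of_subset_of_nonneg hcover (fun Y _ _ => hw0 Y)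
      _ ≤ ∑ Y ∈ G ∪ B1, wt n (r+1) p Y + ∑ Y ∈ B2, wt n (r+1) p Y :=
          sum_union_le _ _ _ hw0
      _ ≤ ∑ Y ∈ G, wt n (r+1) p Y + ∑ Y ∈ B1, wt n (r+1) p Y + ∑ Y ∈ B2, wt n (r+1) p Y := by
          have := sum_union_le G B1 (wt n (r+1) p) hw0
          linarith
  rw [htot] at hsplit
  linarith

end Aux

open scoped Classical in
/-- if `D_s(α) < 1 < D_{s+1}(α)` then a.a.s. the random complex
`Y ∈ Y_r(n; n^{-α})` has dimension exactly `s`. -/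
theorem stmt18 (r s : ℕ) (hs : s + 1 ≤ r) (α : ℕ → ℝ) (hα : ∀ i, 0 ≤ α i)
    (hDs : ∑ i ∈ Finset.range (s + 1),
        ((s + 1).choose (i + 1) : ℝ) / (s + 1) * α i < 1)
    (hDs1 : 1 < ∑ i ∈ Finset.range (s + 2),
        ((s + 2).choose (i + 1) : ℝ) / (s + 2) * α i) :
    Tendsto (fun n : ℕ =>
      ∑ Y ∈ (complexes n r).filter
        (fun Y => (∃ σ ∈ Y, σ.card = s + 1) ∧ ∀ σ ∈ Y, σ.card ≤ s + 1),
        weight n r (fun i => (n : ℝ) ^ (-α i)) Y)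
      atTop (nhds 1) := by
  have hrs : s + 2 ≤ r + 1 := by omega
  set D := ∑ i ∈ Finset.range (s + 1), ((s + 1).choose (i + 1) : ℝ) / (s + 1) * α i with hDdef
  set D2 := ∑ i ∈ Finset.range (s + 2), ((s + 2).choose (i + 1) : ℝ) / (s + 2) * α i with hD2def
  set A : ℝ := (s+2:ℝ) - ∑ i ∈ Finset.range (r+1), (((s+2).choose (i+1)):ℝ) * α i with hAdef
  have hA : A < 0 := by
    have hc2 : ∑ i ∈ Finset.range (r+1), (((s+2).choose (i+1)):ℝ) * α i = D2 * ((s:ℝ)+2) := by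
      rw [hD2def]
      have := sum_shrink r (s+2) hrs (by omega) α
      rw [this]
      norm_num
    rw [hAdef, hc2]
    have hsp : (0:ℝ) < (s:ℝ)+2 := by positivity
    nlinarith
  set K := ((s+1:ℝ) * ((s+1:ℝ)^(s+1) * (((s+1).factorial : ℝ) * 2^(s+1)))) with hKdef
  set ε := 1 - D with hεdef
  have hε : 0 < ε := by rw [hεdef]; linarith
  have l1 : Tendsto (fun n : ℕ => ((n:ℝ)) ^ (-ε)) atTop (nhds 0) :=
    (tendsto_rpow_neg_atTop hε).comp tendsto_natCast_atTop_atTop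
  have l2 : Tendsto (fun n : ℕ => ((n:ℝ)) ^ A) atTop (nhds 0) := by
    have hAe : A = -(-A) := by ring
    rw [hAe]
    exact (tendsto_rpow_neg_atTop (by linarith)).comp tendsto_natCast_atTop_atTop
  have lg : Tendsto (fun n : ℕ => 1 - (K * ((n:ℝ)) ^ (-ε) + ((n:ℝ)) ^ A)) atTop (nhds 1) := by
    have h1 := (l1.const_mul K).add l2
    have h2 := (tendsto_const_nhds : Tendsto (fun _ : ℕ => (1:ℝ)) atTop (nhds 1)).sub h1
    simpa using h2
  apply tendsto_of_tendsto_of_tendsto_of_le_of_le' lg tendsto_const_nhds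
  · filter_upwards [eventually_ge_atTop (2*s+4)] with n hn
    have hper := per_n r s n α hα hn
    have hb1 := bad1_bound r s n hs α hα (by exact hDs) hn
    have hb2 := bad2_bound r s n hs α hα (by omega)
    rw [← hDdef, ← hεdef, ← hKdef] at hb1
    rw [← hAdef] at hb2
    rw [complexes_eq, weight_eq]
    have hlow := hper.1
    linarith
  · filter_upwards [eventually_ge_atTop (2*s+4)] with n hn
    rw [complexes_eq, weight_eq]
    exact (per_n r s n α hα hn).2
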